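/- There exists a non-autonomous system (X, f_{1,∞}) on a compact metric space such that (X, f_{1,∞}) is DC3 chaotic but its 2nd iterate system (X, f_{1,∞}^{[2]}) is not DC3 chaotic. Concretely, if F : I² → I² is a distributionally chaotic homeomorphism of the unit square and f_i := F^{i+1} for odd i, f_i := F^{−i} for even i, then f_1^{2n} = id for all n, so the 2nd iterate system has all orbit distances constant equal to the initial distance, hence fails DC3, while the original system is DC3. -/

import Mathlib

open Filter
open scoped Classical

variable {X : Type*}

/-- `orb f n = f_n ∘ ⋯ ∘ f_1` (0-based: `f k` is the `(k+1)`-st map). -/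
def orb (f : ℕ → X → X) : ℕ → X → X
  | 0 => id
  | n + 1 => f n ∘ orb f n

/-- Lower distributional density along the time sequence `τ`. -/
noncomputable def phiLow [MetricSpace X] (f : ℕ → X → X) (τ : ℕ → ℕ) (x y : X) (t : ℝ) : ℝ :=
  liminf (fun n =>
    (((Finset.range n).filter
      (fun i => dist (orb f (τ i) x) (orb f (τ i) y) < t)).card : ℝ) / n) atTop

/-- Upper distributional density along the time sequence `τ`. -/
noncomputable def phiUpp [MetricSpace X] (f : ℕ → X → X) (τ : ℕ → ℕ) (x y : X) (t : ℝ) : ℝ :=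
  limsup (fun n =>
    (((Finset.range n).filter
      (fun i => dist (orb f (τ i) x) (orb f (τ i) y) < t)).card : ℝ) / n) atTop

/-- Distributional chaos of type 3 along the time sequence `τ`: on some uncountable set,
lower density is strictly below upper density for all `t` in a nondegenerate interval. -/
def DC3 [MetricSpace X] (f : ℕ → X → X) (τ : ℕ → ℕ) : Prop :=
  ∃ S : Set X, ¬S.Countable ∧ ∀ x ∈ S, ∀ y ∈ S, x ≠ y →
    ∃ c d : ℝ, c < d ∧ ∀ t ∈ Set.Ioo c d, phiLow f τ x y t < phiUpp f τ x y t

/-! Cantor space `ℕ → Bool` carries the map `seqCons false`, which halves every distance,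
and its left inverse, the shift. Alternating the two on a set `s` of time blocks makes the orbit
map the identity at every even time, and `seqCons false` or the identity at time `2n + 1`
according as `n ∈ s`. Along even times distances are therefore frozen, so both distributional
densities of the second iterate are the same `0` or `1`. Along all times, for `t` strictly
between `d(x, y) / 2` and `d(x, y)` the pair is `t`-close exactly at the times `2n + 1` with
`n ∈ s`; for `s` the numbers with odd base-4 logarithm the density of these times oscillates
between at most `1/8` and at least `3/8`. -/

open Topology

section CountRatio

variable (p : ℕ → Prop) [DecidablePred p]

noncomputable def countRatio (n : ℕ) : ℝ := Nat.count p n / n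

lemma countRatio_nonneg (n : ℕ) : 0 ≤ countRatio p n := by
  unfold countRatio; positivity

lemma countRatio_le_one (n : ℕ) : countRatio p n ≤ 1 :=
  div_le_one_of_le₀ (by exact_mod_cast (Nat.count_le p)) n.cast_nonneg

lemma tendsto_countRatio_const (q : Prop) [Decidable q] :
    Tendsto (countRatio fun _ => q) atTop (𝓝 (if q then 1 else 0)) := by
  refine tendsto_const_nhds.congr' ?_
  filter_upwards [eventually_gt_atTop 0] with n hn
  by_cases hq : q
  · simp [countRatio, hq, Nat.count_of_forall, hn.ne']
  · simp [countRatio, hq, Nat.count_of_forall_not]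

lemma liminf_lt_limsup_countRatio {a b : ℝ} (hab : a < b)
    (ha : ∃ᶠ n in atTop, countRatio p n ≤ a) (hb : ∃ᶠ n in atTop, b ≤ countRatio p n) :
    liminf (countRatio p) atTop < limsup (countRatio p) atTop :=
  calc liminf (countRatio p) atTop
      ≤ a := liminf_le_of_frequently_le ha (isBoundedUnder_of ⟨0, countRatio_nonneg p⟩)
    _ < b := hab
    _ ≤ limsup (countRatio p) atTop :=
      le_limsup_of_frequently_le hb (isBoundedUnder_of ⟨1, countRatio_le_one p⟩)

variable [MetricSpace X] {f : ℕ → X → X} {τ : ℕ → ℕ} {x y : X} {t : ℝ}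

lemma phiLow_eq_liminf_countRatio (h : ∀ i, dist (orb f (τ i) x) (orb f (τ i) y) < t ↔ p i) :
    phiLow f τ x y t = liminf (countRatio p) atTop := by
  simp only [phiLow, h]
  congr with n
  rw [countRatio, Nat.count_eq_card_filter_range]

lemma phiUpp_eq_limsup_countRatio (h : ∀ i, dist (orb f (τ i) x) (orb f (τ i) y) < t ↔ p i) :
    phiUpp f τ x y t = limsup (countRatio p) atTop := by
  simp only [phiUpp, h]
  congr with n
  rw [countRatio, Nat.count_eq_card_filter_range]

end CountRatio

lemma not_dc3_of_orb_eq_id [MetricSpace X] {f : ℕ → X → X} {τ : ℕ → ℕ}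
    (h : ∀ i, orb f (τ i) = id) : ¬DC3 f τ := by
  rintro ⟨S, hS, hDC3⟩
  obtain ⟨x, hx, y, hy, hxy⟩ := Set.not_subsingleton_iff.1 (mt Set.Subsingleton.countable hS)
  obtain ⟨c, d, hcd, hlt⟩ := hDC3 x hx y hy hxy
  have hconst : ∀ i,
      dist (orb f (τ i) x) (orb f (τ i) y) < (c + d) / 2 ↔ dist x y < (c + d) / 2 := by
    simp [h]
  have hgap := hlt ((c + d) / 2) ⟨by linarith, by linarith⟩
  rw [phiLow_eq_liminf_countRatio _ hconst, phiUpp_eq_limsup_countRatio _ hconst,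
    (tendsto_countRatio_const _).liminf_eq, (tendsto_countRatio_const _).limsup_eq] at hgap
  exact hgap.false

section Alternating

variable (g h : X → X) (s : Set ℕ)

noncomputable def alternating (i : ℕ) : X → X :=
  if i / 2 ∈ s then (if Even i then g else h) else id

lemma alternating_two_mul (n : ℕ) : alternating g h s (2 * n) = if n ∈ s then g else id := by
  simp [alternating]

lemma alternating_two_mul_add_one (n : ℕ) :
    alternating g h s (2 * n + 1) = if n ∈ s then h else id := by
  have : (2 * n + 1) / 2 = n := by omega
  simp [alternating, this]

lemma continuous_alternating [TopologicalSpace X] (hg : Continuous g) (hh : Continuous h)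
    (i : ℕ) : Continuous (alternating g h s i) := by
  unfold alternating
  split_ifs
  exacts [hg, hh, continuous_id]

variable {g h}

lemma orb_alternating_two_mul (hgh : Function.LeftInverse h g) (n : ℕ) :
    orb (alternating g h s) (2 * n) = id := by
  induction n with
  | zero => rfl
  | succ n ih =>
    change alternating g h s (2 * n + 1) ∘ (alternating g h s (2 * n) ∘ orb _ (2 * n)) = id
    rw [ih, alternating_two_mul, alternating_two_mul_add_one]
    split_ifs
    exacts [hgh.comp_eq_id, rfl]

lemma orb_alternating_two_mul_add_one (hgh : Function.LeftInverse h g) (n : ℕ) :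
    orb (alternating g h s) (2 * n + 1) = if n ∈ s then g else id := by
  rw [orb, orb_alternating_two_mul s hgh, alternating_two_mul, Function.comp_id]

variable [MetricSpace X]

lemma dist_orb_alternating_lt_iff (hg : ∀ x y, dist (g x) (g y) = dist x y / 2)
    (hgh : Function.LeftInverse h g) {x y : X} {t : ℝ}
    (ht : t ∈ Set.Ioo (dist x y / 2) (dist x y)) (i : ℕ) :
    dist (orb (alternating g h s) i x) (orb (alternating g h s) i y) < t ↔
      Odd i ∧ i / 2 ∈ s := by
  obtain ⟨n, rfl | rfl⟩ := Nat.even_or_odd' i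
  · simp [orb_alternating_two_mul s hgh, ht.2.not_gt]
  · have : (2 * n + 1) / 2 = n := by omega
    rw [orb_alternating_two_mul_add_one s hgh]
    split_ifs <;> simp [*, ht.1, ht.2.not_gt]

lemma dc3_alternating [Uncountable X] (hg : ∀ x y, dist (g x) (g y) = dist x y / 2)
    (hgh : Function.LeftInverse h g)
    (hs : liminf (countRatio fun i => Odd i ∧ i / 2 ∈ s) atTop <
      limsup (countRatio fun i => Odd i ∧ i / 2 ∈ s) atTop) :
    DC3 (alternating g h s) id := by
  refine ⟨Set.univ, Set.not_countable_univ, fun x _ y _ hxy =>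
    ⟨dist x y / 2, dist x y, by linarith [dist_pos.2 hxy], fun t ht => ?_⟩⟩
  have hclose := dist_orb_alternating_lt_iff s hg hgh ht
  rwa [phiLow_eq_liminf_countRatio (τ := id) _ hclose,
    phiUpp_eq_limsup_countRatio (τ := id) _ hclose]

lemma not_dc3_alternating_two_mul (hgh : Function.LeftInverse h g) :
    ¬DC3 (alternating g h s) (fun n => 2 * n) :=
  not_dc3_of_orb_eq_id (orb_alternating_two_mul s hgh)

end Alternating

lemma count_odd_and_half_mem (s : Set ℕ) (n : ℕ) :
    Nat.count (fun i => Odd i ∧ i / 2 ∈ s) (2 * n) = Nat.count (· ∈ s) n := by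
  induction n with
  | zero => rfl
  | succ n ih =>
    have : (2 * n + 1) / 2 = n := by omega
    rw [show 2 * (n + 1) = 2 * n + 1 + 1 by ring, Nat.count_succ, Nat.count_succ, ih,
      Nat.count_succ]
    simp [this]

lemma countRatio_odd_and_half_mem (s : Set ℕ) (n : ℕ) :
    countRatio (fun i => Odd i ∧ i / 2 ∈ s) (2 * n) = Nat.count (· ∈ s) n / (2 * n) := by
  rw [countRatio, count_odd_and_half_mem]
  push_cast
  rfl

def oddLog4 : Set ℕ := {m | Odd (Nat.log 4 m)}

lemma count_oddLog4_pow_le (k : ℕ) :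
    Nat.count (· ∈ oddLog4) (4 ^ (2 * k + 1)) ≤ 4 ^ (2 * k) := by
  have hblock : Nat.count (fun j => 4 ^ (2 * k) + j ∈ oddLog4) (3 * 4 ^ (2 * k)) = 0 :=
    Nat.count_of_forall_not fun m hm => by
      rw [oddLog4, Set.mem_ofPred_eq, Nat.log_eq_of_pow_le_of_lt_pow (m := 2 * k) (by omega)
        (by rw [pow_succ]; omega)]
      exact Nat.not_odd_iff_even.2 (even_two_mul k)
  rw [show 4 ^ (2 * k + 1) = 4 ^ (2 * k) + 3 * 4 ^ (2 * k) by ring, Nat.count_add, hblock,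
    add_zero]
  exact Nat.count_le _

lemma le_count_oddLog4_pow (k : ℕ) :
    3 * 4 ^ (2 * k + 1) ≤ Nat.count (· ∈ oddLog4) (4 ^ (2 * k + 2)) := by
  have hblock : Nat.count (fun j => 4 ^ (2 * k + 1) + j ∈ oddLog4) (3 * 4 ^ (2 * k + 1)) =
      3 * 4 ^ (2 * k + 1) :=
    Nat.count_of_forall fun m hm => by
      rw [oddLog4, Set.mem_ofPred_eq,
        Nat.log_eq_of_pow_le_of_lt_pow (m := 2 * k + 1) (by omega)
          (by rw [pow_succ 4 (2 * k + 1)]; omega)]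
      exact odd_two_mul_add_one k
  rw [show 4 ^ (2 * k + 2) = 4 ^ (2 * k + 1) + 3 * 4 ^ (2 * k + 1) by ring, Nat.count_add,
    hblock]
  exact Nat.le_add_left _ _

lemma liminf_lt_limsup_countRatio_oddLog4 :
    liminf (countRatio fun i => Odd i ∧ i / 2 ∈ oddLog4) atTop <
      limsup (countRatio fun i => Odd i ∧ i / 2 ∈ oddLog4) atTop := by
  have hpow : ∀ j, Tendsto (fun k => 2 * 4 ^ (2 * k + j)) atTop atTop := fun j =>
    tendsto_atTop_mono (fun k => show k ≤ _ by
      have := Nat.lt_pow_self (n := k) (by norm_num : 1 < 4)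
      have := Nat.pow_le_pow_right (by norm_num : 0 < 4) (by omega : k ≤ 2 * k + j)
      omega) tendsto_id
  refine liminf_lt_limsup_countRatio _ (a := 1 / 8) (b := 3 / 8) (by norm_num)
    ((hpow 1).frequently (Frequently.of_forall fun k => ?_))
    ((hpow 2).frequently (Frequently.of_forall fun k => ?_))
  · have hcount : (Nat.count (· ∈ oddLog4) (4 ^ (2 * k + 1)) : ℝ) ≤ 4 ^ (2 * k) := by
      exact_mod_cast count_oddLog4_pow_le k
    rw [countRatio_odd_and_half_mem, div_le_iff₀ (by positivity)]
    push_cast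
    rw [pow_succ (4 : ℝ) (2 * k)]
    linarith
  · have hcount :
        (3 * 4 ^ (2 * k + 1) : ℝ) ≤ Nat.count (· ∈ oddLog4) (4 ^ (2 * k + 2)) := by
      exact_mod_cast le_count_oddLog4_pow k
    rw [countRatio_odd_and_half_mem, le_div_iff₀ (by positivity)]
    push_cast
    rw [pow_succ (4 : ℝ) (2 * k + 1)]
    linarith

section CantorSpace

variable {α : Type*}

def seqCons (a : α) (x : ℕ → α) : ℕ → α
  | 0 => a
  | n + 1 => x n

lemma leftInverse_seqCons (a : α) : Function.LeftInverse (· ∘ Nat.succ) (seqCons a) :=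
  fun _ => rfl

lemma firstDiff_seqCons (a : α) {x y : ℕ → α} (hxy : x ≠ y) :
    PiNat.firstDiff (seqCons a x) (seqCons a y) = PiNat.firstDiff x y + 1 := by
  have hcons : seqCons a x ≠ seqCons a y := (leftInverse_seqCons a).injective.ne hxy
  refine eq_of_forall_le_iff fun c => ?_
  rw [← PiNat.mem_cylinder_iff_le_firstDiff hcons]
  cases c with
  | zero => simp
  | succ i =>
    rw [Nat.add_le_add_iff_right, ← PiNat.mem_cylinder_iff_le_firstDiff hxy,
      PiNat.mem_cylinder_iff, PiNat.mem_cylinder_iff, Nat.forall_lt_succ_left]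
    exact ⟨And.right, fun h => ⟨rfl, h⟩⟩

variable [TopologicalSpace α]

lemma continuous_seqCons (a : α) : Continuous (seqCons a) :=
  continuous_pi fun n => by cases n; exacts [continuous_const, continuous_apply _]

attribute [local instance] PiNat.metricSpace

variable [DiscreteTopology α]

lemma dist_seqCons (a : α) (x y : ℕ → α) :
    dist (seqCons a x) (seqCons a y) = dist x y / 2 := by
  rcases eq_or_ne x y with rfl | hxy
  · simp
  rw [PiNat.dist_eq_of_ne ((leftInverse_seqCons a).injective.ne hxy), PiNat.dist_eq_of_ne hxy,
    firstDiff_seqCons a hxy, pow_succ]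
  ring

end CantorSpace

lemma uncountable_nat_arrow_bool : Uncountable (ℕ → Bool) := by
  refine uncountable_iff_forall_not_surjective.2 fun f hf =>
    Function.cantor_surjective (fun n => {m | f n m}) fun s => ?_
  obtain ⟨n, hn⟩ := hf fun m => decide (m ∈ s)
  exact ⟨n, by simp [hn]⟩

theorem stmt_14 :
    ∃ (X : Type) (_ : MetricSpace X) (_ : CompactSpace X) (f : ℕ → X → X),
      (∀ n, Continuous (f n)) ∧ DC3 f id ∧ ¬ DC3 f (fun n => 2 * n) := by
  let _ := PiNat.metricSpace (E := fun _ : ℕ => Bool)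
  have := uncountable_nat_arrow_bool
  let f := alternating (seqCons false) (· ∘ Nat.succ) oddLog4
  have hinv := leftInverse_seqCons false
  refine ⟨ℕ → Bool, inferInstance, inferInstance, f,
    continuous_alternating _ _ _ (continuous_seqCons false) (by fun_prop), ?_, ?_⟩
  · exact dc3_alternating oddLog4 (dist_seqCons false) hinv liminf_lt_limsup_countRatio_oddLog4
  · exact not_dc3_alternating_two_mul oddLog4 hinv
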